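/- arXiv:1312.0177 — 2 statements merged into one kernel-verified Lean document; each statement's English description precedes it below -/
import Mathlib

section
/- Let Φ ∈ S₂(E, E_*). The operator P_Φ = [[P₊, −Φ P₊],[−Φ* P₋, P₋]] on L²(E_*) ⊕ L²(E) satisfies P_Φ² = P_Φ, restricts to the identity on the scattering subspace K_Φ, and annihilates W ⊕ W_*; hence P_Φ is the orthogonal projection of ℋ onto K_Φ. -/
/- STATEMENT 7: Let Φ ∈ S₂(E,E_*).  The operator P_Φ = [[P₊, −ΦP₊],[−Φ*P₋, P₋]] on
L²(E_*) ⊕ L²(E) satisfies P_Φ² = P_Φ, restricts to the identity on the scattering subspace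
K_Φ, annihilates W ⊕ W_*; hence P_Φ is the orthogonal projection of ℋ onto K_Φ.

P₊ (resp. P₋ = I − P₊) is the orthogonal projection onto H² (resp. L²⊖H²) in each of the
two component spaces; W_* = {(h, Φ*h) : h ∈ L²⊖H²(E_*)}, W = {(Φh, h) : h ∈ H²(E)};
K_Φ = {(f,g) ∈ ℋ : f ∈ H²(E_*), g ∈ L²⊖H²(E)}; ℋ = range S, with operator-range inner
product `ip`; multiplication by Φ maps H²(E) into H²(E_*). -/

open scoped ComplexInnerProductSpace

noncomputable def c1 {A B : Type*} [NormedAddCommGroup A] [NormedAddCommGroup B]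
    (x : WithLp 2 (A × B)) : A := (WithLp.equiv 2 (A × B) x).1

noncomputable def c2 {A B : Type*} [NormedAddCommGroup A] [NormedAddCommGroup B]
    (x : WithLp 2 (A × B)) : B := (WithLp.equiv 2 (A × B) x).2

noncomputable def pr {A B : Type*} [NormedAddCommGroup A] [NormedAddCommGroup B]
    (f : A) (g : B) : WithLp 2 (A × B) := (WithLp.equiv 2 (A × B)).symm (f, g)

/-
Since `Φ H² ⊆ H²`, taking adjoints gives `P₊ Φ* P₋ = 0`. Hence the first component of `P_Φ x` lies
in `H²` and the second in `L² ⊖ H²`, while `P_Φ` fixes every such pair; this yields idempotence,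
the identity on `K_Φ` and the vanishing on `W ⊕ W_*`. Moreover `x - P_Φ x = S² u` with
`u = (P₋ f, P₊ g)`, so `x - P_Φ x ∈ ℋ`, and for `S y ∈ K_Φ` the range inner product
`⟨S² u, S y⟩_ℋ = ⟨u, S y⟩` vanishes componentwise.
-/

open ContinuousLinearMap

section Components

variable {A B : Type*} [NormedAddCommGroup A] [NormedAddCommGroup B]

theorem pr_c1_c2 (x : WithLp 2 (A × B)) : pr (c1 x) (c2 x) = x := rfl

@[simp] theorem pr_zero_zero : pr (0 : A) (0 : B) = 0 := rfl

theorem pr_sub (a a' : A) (b b' : B) : pr a b - pr a' b' = pr (a - a') (b - b') := rfl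

theorem inner_pr [InnerProductSpace ℂ A] [InnerProductSpace ℂ B] (a a' : A) (b b' : B) :
    ⟪pr a b, pr a' b'⟫ = ⟪a, a'⟫ + ⟪b, b'⟫ := by
  rw [WithLp.prod_inner_apply]; rfl

end Components

section Operators

variable {E F : Type*} [NormedAddCommGroup E] [InnerProductSpace ℂ E] [CompleteSpace E]
  [NormedAddCommGroup F] [InnerProductSpace ℂ F] [CompleteSpace F]

theorem apply_adjoint_apply_sub_self_eq_zero {P : E →L[ℂ] E} {Q : F →L[ℂ] F} {T : E →L[ℂ] F}
    (hP : IsSelfAdjoint P) (hQ : IsSelfAdjoint Q) (hT : ∀ h, Q (T (P h)) = T (P h)) (f : F) :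
    P (adjoint T (f - Q f)) = 0 := by
  have hcomp : Q ∘L T ∘L P = T ∘L P := ext hT
  have hadj : P ∘L adjoint T ∘L Q = P ∘L adjoint T := by
    simpa only [adjoint_comp, hP.adjoint_eq, hQ.adjoint_eq, comp_assoc]
      using congrArg adjoint hcomp
  simpa only [comp_apply, map_sub, sub_eq_zero] using (DFunLike.congr_fun hadj f).symm

theorem inner_apply_eq_inner_apply_of_isSelfAdjoint {S : E →L[ℂ] E} (hS : IsSelfAdjoint S)
    (x y : E) : ⟪S x, y⟫ = ⟪x, S y⟫ :=
  hS.isSymmetric x y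

theorem mem_orthogonal_ker_of_isSelfAdjoint {S : E →L[ℂ] E} (hS : IsSelfAdjoint S) (u : E) :
    S u ∈ (LinearMap.ker S.toLinearMap)ᗮ := by
  rw [← hS.isSymmetric.orthogonal_range]
  exact Submodule.le_orthogonal_orthogonal _ ⟨u, rfl⟩

end Operators

section BlockProjection

variable {E F : Type*} [NormedAddCommGroup E] [InnerProductSpace ℂ E] [CompleteSpace E]
  [NormedAddCommGroup F] [InnerProductSpace ℂ F] [CompleteSpace F]

/-- `R = [[Q, -T P], [-T* (1 - Q), 1 - P]]` on `F ⊕ E`; for `P_Φ`, `Q` and `P` are the Hardy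
projections `P₊` in `L²(E_*)` and `L²(E)`, and `T` is multiplication by `Φ`. -/
def IsBlockProjection (P : E →L[ℂ] E) (Q : F →L[ℂ] F) (T : E →L[ℂ] F)
    (R : WithLp 2 (F × E) →L[ℂ] WithLp 2 (F × E)) : Prop :=
  ∀ f g, R (pr f g) = pr (Q f - T (P g)) ((g - P g) - adjoint T (f - Q f))

namespace IsBlockProjection

variable {P : E →L[ℂ] E} {Q : F →L[ℂ] F} {T : E →L[ℂ] F}
  {R : WithLp 2 (F × E) →L[ℂ] WithLp 2 (F × E)}

theorem c1_apply (hR : IsBlockProjection P Q T R) (x : WithLp 2 (F × E)) :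
    c1 (R x) = Q (c1 x) - T (P (c2 x)) := by
  rw [← pr_c1_c2 x, hR]; rfl

theorem c2_apply (hR : IsBlockProjection P Q T R) (x : WithLp 2 (F × E)) :
    c2 (R x) = (c2 x - P (c2 x)) - adjoint T (c1 x - Q (c1 x)) := by
  rw [← pr_c1_c2 x, hR]; rfl

theorem proj_c1_apply (hR : IsBlockProjection P Q T R) (hQ2 : Q ∘L Q = Q)
    (hT : ∀ h, Q (T (P h)) = T (P h)) (x : WithLp 2 (F × E)) :
    Q (c1 (R x)) = c1 (R x) := by
  rw [hR.c1_apply, map_sub, hT, ← comp_apply Q Q, hQ2]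

theorem proj_c2_apply (hR : IsBlockProjection P Q T R) (hP : IsSelfAdjoint P)
    (hP2 : P ∘L P = P) (hQ : IsSelfAdjoint Q) (hT : ∀ h, Q (T (P h)) = T (P h))
    (x : WithLp 2 (F × E)) : P (c2 (R x)) = 0 := by
  rw [hR.c2_apply, map_sub, map_sub, ← comp_apply P P, hP2,
    apply_adjoint_apply_sub_self_eq_zero hP hQ hT, sub_self, sub_zero]

theorem apply_eq_self (hR : IsBlockProjection P Q T R) {x : WithLp 2 (F × E)}
    (h1 : Q (c1 x) = c1 x) (h2 : P (c2 x) = 0) : R x = x := by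
  conv_lhs => rw [← pr_c1_c2 x, hR, h1, h2]
  simp only [map_zero, sub_zero, sub_self]
  rfl

theorem comp_self (hR : IsBlockProjection P Q T R) (hP : IsSelfAdjoint P) (hP2 : P ∘L P = P)
    (hQ : IsSelfAdjoint Q) (hQ2 : Q ∘L Q = Q) (hT : ∀ h, Q (T (P h)) = T (P h)) :
    R ∘L R = R :=
  ext fun x ↦ hR.apply_eq_self (hR.proj_c1_apply hQ2 hT x) (hR.proj_c2_apply hP hP2 hQ hT x)

theorem apply_pr_adjoint_eq_zero (hR : IsBlockProjection P Q T R) (hP : IsSelfAdjoint P)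
    (hQ : IsSelfAdjoint Q) (hT : ∀ h, Q (T (P h)) = T (P h)) {h : F} (hh : Q h = 0) :
    R (pr h (adjoint T h)) = 0 := by
  have hPT : P (adjoint T h) = 0 := by
    simpa only [hh, sub_zero] using apply_adjoint_apply_sub_self_eq_zero hP hQ hT h
  rw [hR, hh, hPT]
  simp

theorem apply_pr_eq_zero (hR : IsBlockProjection P Q T R) (hT : ∀ h, Q (T (P h)) = T (P h))
    {h : E} (hh : P h = h) : R (pr (T h) h) = 0 := by
  have hQT : Q (T h) = T h := by rw [← hh, hT]
  rw [hR, hQT, hh]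
  simp

theorem sub_apply_eq (hR : IsBlockProjection P Q T R)
    (S : WithLp 2 (F × E) →L[ℂ] WithLp 2 (F × E))
    (hS2 : ∀ f g, S (S (pr f g)) = pr (f + T g) (adjoint T f + g)) (x : WithLp 2 (F × E)) :
    x - R x = S (S (pr (c1 x - Q (c1 x)) (P (c2 x)))) := by
  rw [hS2]
  conv_lhs => rw [← pr_c1_c2 x, hR, pr_sub]
  congr 1 <;> abel

end IsBlockProjection

theorem inner_pr_sub_eq_zero {P : E →L[ℂ] E} {Q : F →L[ℂ] F} (hP : IsSelfAdjoint P)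
    (hQ : IsSelfAdjoint Q) (hQ2 : Q ∘L Q = Q) (f : F) (g : E) {y : WithLp 2 (F × E)}
    (h1 : Q (c1 y) = c1 y) (h2 : P (c2 y) = 0) : ⟪pr (f - Q f) (P g), y⟫ = 0 := by
  have hf : ⟪f - Q f, c1 y⟫ = 0 := by
    rw [← h1, ← inner_apply_eq_inner_apply_of_isSelfAdjoint hQ, map_sub, ← comp_apply Q Q, hQ2,
      sub_self, inner_zero_left]
  have hg : ⟪P g, c2 y⟫ = 0 := by
    rw [inner_apply_eq_inner_apply_of_isSelfAdjoint hP, h2, inner_zero_right]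
  rw [← pr_c1_c2 y, inner_pr, hf, hg, add_zero]

end BlockProjection

theorem stmt_7_general {L2E L2Es : Type*}
    [NormedAddCommGroup L2E] [InnerProductSpace ℂ L2E] [CompleteSpace L2E]
    [NormedAddCommGroup L2Es] [InnerProductSpace ℂ L2Es] [CompleteSpace L2Es]
    (MΦ : L2E →L[ℂ] L2Es)
    -- S = [[I,Φ],[Φ*,I]]^{1/2}:
    (S : WithLp 2 (L2Es × L2E) →L[ℂ] WithLp 2 (L2Es × L2E))
    (hS : IsSelfAdjoint S)
    (hS2 : ∀ (f : L2Es) (g : L2E),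
      S (S (pr f g)) = pr (f + MΦ g) (ContinuousLinearMap.adjoint MΦ f + g))
    -- the projections P₊, P₋ = 1 − P₊ onto H² and L²⊖H² in both component spaces:
    (PpE : L2E →L[ℂ] L2E) (hPpE : IsSelfAdjoint PpE) (hPpE2 : PpE ∘L PpE = PpE)
    (PpEs : L2Es →L[ℂ] L2Es) (hPpEs : IsSelfAdjoint PpEs) (hPpEs2 : PpEs ∘L PpEs = PpEs)
    -- multiplication by Φ maps H²(E) into H²(E_*):
    (hMΦH2 : ∀ h : L2E, PpEs (MΦ (PpE h)) = MΦ (PpE h))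
    -- P_Φ = [[P₊, −ΦP₊],[−Φ*P₋, P₋]]:
    (PΦ : WithLp 2 (L2Es × L2E) →L[ℂ] WithLp 2 (L2Es × L2E))
    (hPΦ : ∀ (f : L2Es) (g : L2E),
      PΦ (pr f g) = pr (PpEs f - MΦ (PpE g))
        ((g - PpE g) - ContinuousLinearMap.adjoint MΦ (f - PpEs f)))
    -- the subspaces W_*, W, K_Φ:
    (Wstar Wsp KΦ : Set (WithLp 2 (L2Es × L2E)))
    (hWstar : Wstar = {p | ∃ h : L2Es, PpEs h = 0 ∧
      p = pr h (ContinuousLinearMap.adjoint MΦ h)})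
    (hWsp : Wsp = {p | ∃ h : L2E, PpE h = h ∧ p = pr (MΦ h) h})
    (hKΦ : KΦ = {p | p ∈ Set.range S ∧ PpEs (c1 p) = c1 p ∧ PpE (c2 p) = 0})
    -- the operator-range inner product of ℋ:
    (ip : WithLp 2 (L2Es × L2E) → WithLp 2 (L2Es × L2E) → ℂ)
    (hip : ∀ x y, x ∈ (LinearMap.ker S.toLinearMap)ᗮ → ip (S x) (S y) = ⟪x, y⟫) :
    PΦ ∘L PΦ = PΦ ∧
      (∀ p ∈ KΦ, PΦ p = p) ∧
      (∀ p ∈ Wstar ∪ Wsp, PΦ p = 0) ∧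
      -- hence P_Φ is the ℋ-orthogonal projection of ℋ onto K_Φ:
      ∀ p ∈ Set.range S, PΦ p ∈ KΦ ∧ ∀ q ∈ KΦ, ip (p - PΦ p) q = 0 := by
  have hR : IsBlockProjection PpE PpEs MΦ PΦ := hPΦ
  subst hWstar hWsp hKΦ
  refine ⟨hR.comp_self hPpE hPpE2 hPpEs hPpEs2 hMΦH2, ?_, ?_, ?_⟩
  · rintro p ⟨-, h1, h2⟩
    exact hR.apply_eq_self h1 h2
  · rintro p (⟨h, hh, rfl⟩ | ⟨h, hh, rfl⟩)
    · exact hR.apply_pr_adjoint_eq_zero hPpE hPpEs hMΦH2 hh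
    · exact hR.apply_pr_eq_zero hMΦH2 hh
  · rintro _ ⟨x, rfl⟩
    set u := pr (c1 (S x) - PpEs (c1 (S x))) (PpE (c2 (S x)))
    have hsub : S x - PΦ (S x) = S (S u) := hR.sub_apply_eq S hS2 (S x)
    refine ⟨⟨⟨x - S u, ?_⟩, hR.proj_c1_apply hPpEs2 hMΦH2 _,
      hR.proj_c2_apply hPpE hPpE2 hPpEs hMΦH2 _⟩, ?_⟩
    · rw [map_sub, ← hsub, sub_sub_cancel]
    · rintro _ ⟨⟨y, rfl⟩, h1, h2⟩
      rw [hsub, hip _ y (mem_orthogonal_ker_of_isSelfAdjoint hS _),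
        inner_apply_eq_inner_apply_of_isSelfAdjoint hS]
      exact inner_pr_sub_eq_zero hPpE hPpEs hPpEs2 _ _ h1 h2

theorem stmt_7 {L2E L2Es : Type*}
    [NormedAddCommGroup L2E] [InnerProductSpace ℂ L2E] [CompleteSpace L2E]
    [NormedAddCommGroup L2Es] [InnerProductSpace ℂ L2Es] [CompleteSpace L2Es]
    (MΦ : L2E →L[ℂ] L2Es) (hMΦ : ‖MΦ‖ ≤ 1)
    -- S = [[I,Φ],[Φ*,I]]^{1/2}:
    (S : WithLp 2 (L2Es × L2E) →L[ℂ] WithLp 2 (L2Es × L2E))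
    (hS : IsSelfAdjoint S) (hSpos : ∀ x, 0 ≤ (⟪S x, x⟫).re)
    (hS2 : ∀ (f : L2Es) (g : L2E),
      S (S (pr f g)) = pr (f + MΦ g) (ContinuousLinearMap.adjoint MΦ f + g))
    -- the projections P₊, P₋ = 1 − P₊ onto H² and L²⊖H² in both component spaces:
    (PpE : L2E →L[ℂ] L2E) (hPpE : IsSelfAdjoint PpE) (hPpE2 : PpE ∘L PpE = PpE)
    (PpEs : L2Es →L[ℂ] L2Es) (hPpEs : IsSelfAdjoint PpEs) (hPpEs2 : PpEs ∘L PpEs = PpEs)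
    -- multiplication by Φ maps H²(E) into H²(E_*):
    (hMΦH2 : ∀ h : L2E, PpEs (MΦ (PpE h)) = MΦ (PpE h))
    -- P_Φ = [[P₊, −ΦP₊],[−Φ*P₋, P₋]]:
    (PΦ : WithLp 2 (L2Es × L2E) →L[ℂ] WithLp 2 (L2Es × L2E))
    (hPΦ : ∀ (f : L2Es) (g : L2E),
      PΦ (pr f g) = pr (PpEs f - MΦ (PpE g))
        ((g - PpE g) - ContinuousLinearMap.adjoint MΦ (f - PpEs f)))
    -- the subspaces W_*, W, K_Φ:
    (Wstar Wsp KΦ : Set (WithLp 2 (L2Es × L2E)))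
    (hWstar : Wstar = {p | ∃ h : L2Es, PpEs h = 0 ∧
      p = pr h (ContinuousLinearMap.adjoint MΦ h)})
    (hWsp : Wsp = {p | ∃ h : L2E, PpE h = h ∧ p = pr (MΦ h) h})
    (hKΦ : KΦ = {p | p ∈ Set.range S ∧ PpEs (c1 p) = c1 p ∧ PpE (c2 p) = 0})
    -- the operator-range inner product of ℋ:
    (ip : WithLp 2 (L2Es × L2E) → WithLp 2 (L2Es × L2E) → ℂ)
    (hip : ∀ x y, x ∈ (LinearMap.ker S.toLinearMap)ᗮ → ip (S x) (S y) = ⟪x, y⟫) :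
    PΦ ∘L PΦ = PΦ ∧
      (∀ p ∈ KΦ, PΦ p = p) ∧
      (∀ p ∈ Wstar ∪ Wsp, PΦ p = 0) ∧
      -- hence P_Φ is the ℋ-orthogonal projection of ℋ onto K_Φ:
      ∀ p ∈ Set.range S, PΦ p ∈ KΦ ∧ ∀ q ∈ KΦ, ip (p - PΦ p) q = 0 :=
  stmt_7_general MΦ S hS hS2 PpE hPpE hPpE2 PpEs hPpEs hPpEs2 hMΦH2 PΦ hPΦ Wstar Wsp KΦ hWstar hWsp
    hKΦ ip hip
end

section
/- Let Φ ∈ S₂(E, E_*). There is an isometry V from the two-variable de Branges–Rovnyak space H_Φ into the scattering subspace K_Φ such that for each f ∈ H_Φ, Vf = (f, g) for some g ∈ L²⊖H²(E), and the adjoint V* satisfies V*(f, g) = f for every (f, g) ∈ K_Φ. On the dense set D_{Φ*}² H²(E_*), V is given by V(D_{Φ*}² h) = P_Φ(h, Φ*h). -/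
/- STATEMENT 10: Let Φ ∈ S₂(E,E_*).  There is an isometry V : H_Φ → K_Φ such that for each
f ∈ H_Φ, Vf = (f, g) for some g ∈ L²⊖H²(E), with V*(f,g) = f for every (f,g) ∈ K_Φ; on the
dense subset D_{Φ*}²H²(E_*) of H_Φ, V is given by V(D_{Φ*}² h) = P_Φ(h, Φ*h).

H²(E_*) is the abstract Hilbert space `H2`, isometrically embedded into L²(E_*) by `j`
with range H² = range P₊; D = D_{Φ*} with D² = I − ΦP₊Φ* transported through j
(hypothesis `hDj`); H_Φ is the operator range of D, with inner product `ipH`;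
ℋ = range S with inner product `ipW`, and K_Φ, P_Φ as usual.  Writing
V h := P_Φ(j h, Φ* j h), the conclusions state:
(1) V(D²h) depends isometrically on D²h (hence extends to an isometry of H_Φ into K_Φ);
(2) V(D²h) has first component j(D²h) (i.e. Vf = (f,g)) and second component in L²⊖H²(E);
(3) for every (f,g) ∈ K_Φ, V*(f,g) = f: f is (the boundary function of) an element of
    H_Φ and ⟨(f,g), V x⟩_ℋ = ⟨f, x⟩_{H_Φ} for all x in the dense subset D²H² of H_Φ. -/

open scoped ComplexInnerProductSpace

open scoped InnerProductSpace

/-! Put `u h := (j h, -P₊ Φ* j h)`. The defining identities of `S` and `P_Φ` give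
`P_Φ (j h, Φ* j h) = S² (u h)` and `⟪u h, S² (u h')⟫ = ⟪h, D² h'⟫`, so `‖S (u h)‖ = ‖D h‖`:
the map `D h ↦ S (u h)` is isometric, which is the isometry of `V` for the operator-range
inner products. If `(f, g) = S q ∈ K_Φ`, then `h ↦ ⟪f, h⟫ = ⟪q, S (u h)⟫` is bounded by
`‖q‖ ‖D h‖`, so Douglas' lemma puts `f` in the range of `D`, and this preimage computes
`V* (f, g)`. -/

lemma c1_pr {A B : Type*} [NormedAddCommGroup A] [NormedAddCommGroup B] (f : A) (g : B) :
    c1 (pr f g) = f := rfl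

lemma c2_pr {A B : Type*} [NormedAddCommGroup A] [NormedAddCommGroup B] (f : A) (g : B) :
    c2 (pr f g) = g := rfl

section
variable {𝕜 E F : Type*} [RCLike 𝕜] [NormedAddCommGroup E] [InnerProductSpace 𝕜 E]
  [NormedAddCommGroup F] [InnerProductSpace 𝕜 F]

theorem IsSelfAdjoint.inner_apply_left [CompleteSpace E] {T : E →L[𝕜] E}
    (hT : IsSelfAdjoint T) (x y : E) : ⟪T x, y⟫_𝕜 = ⟪x, T y⟫_𝕜 :=
  hT.isSymmetric x y

theorem IsSelfAdjoint.apply_mem_orthogonal_ker [CompleteSpace E] {T : E →L[𝕜] E}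
    (hT : IsSelfAdjoint T) (x : E) : T x ∈ (LinearMap.ker (T : E →ₗ[𝕜] E))ᗮ := by
  refine (Submodule.mem_orthogonal _ _).2 fun z hz => ?_
  rw [← hT.adjoint_eq, ContinuousLinearMap.adjoint_inner_right, show T z = 0 from hz,
    inner_zero_left]

theorem exists_mem_orthogonal_ker_apply_eq [CompleteSpace E] (T : E →L[𝕜] F) (x₀ : E) :
    ∃ x ∈ (LinearMap.ker (T : E →ₗ[𝕜] F))ᗮ, T x = T x₀ := by
  obtain ⟨y, hy, z, hz, rfl⟩ :=
    (LinearMap.ker (T : E →ₗ[𝕜] F)).exists_add_mem_mem_orthogonal x₀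
  exact ⟨z, hz, by rw [map_add, show T y = 0 from hy, zero_add]⟩

/-- Douglas' lemma: extend `T x ↦ ⟪y, x⟫` from `range T` by Hahn–Banach, then apply Riesz. -/
theorem exists_adjoint_apply_eq_of_norm_inner_le [CompleteSpace E] [CompleteSpace F]
    (T : E →L[𝕜] F) (y : E) (C : ℝ) (hle : ∀ x, ‖⟪y, x⟫_𝕜‖ ≤ C * ‖T x‖) :
    ∃ w, ContinuousLinearMap.adjoint T w = y := by
  have hker : LinearMap.ker (T : E →ₗ[𝕜] F) ≤ LinearMap.ker (innerₛₗ 𝕜 y) := fun x hx => by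
    simpa [show T x = 0 from hx] using hle x
  let φ : LinearMap.range (T : E →ₗ[𝕜] F) →ₗ[𝕜] 𝕜 :=
    (LinearMap.ker (T : E →ₗ[𝕜] F)).liftQ _ hker ∘ₗ
      (T : E →ₗ[𝕜] F).quotKerEquivRange.symm.toLinearMap
  have hφ (x : E) : φ ⟨T x, LinearMap.mem_range_self _ x⟩ = ⟪y, x⟫_𝕜 :=
    congrArg (Submodule.liftQ _ _ hker)
      ((T : E →ₗ[𝕜] F).quotKerEquivRange_symm_apply_image x _)
  have hφle : ∀ v, ‖φ v‖ ≤ C * ‖(v : F)‖ := by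
    rintro ⟨_, x, rfl⟩
    exact (congrArg norm (hφ x)).trans_le (hle x)
  obtain ⟨g, hg, -⟩ := exists_extension_norm_eq _ (φ.mkContinuous C hφle)
  refine ⟨(InnerProductSpace.toDual 𝕜 F).symm g, ext_inner_right 𝕜 fun x => ?_⟩
  rw [ContinuousLinearMap.adjoint_inner_left, InnerProductSpace.toDual_symm_apply]
  exact (hg ⟨T x, LinearMap.mem_range_self _ x⟩).trans (hφ x)

def IsOperatorRangeInner (T : E →L[𝕜] F) (ip : F → F → 𝕜) : Prop :=
  ∀ x y, x ∈ (LinearMap.ker (T : E →ₗ[𝕜] F))ᗮ → ip (T x) (T y) = ⟪x, y⟫_𝕜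

theorem IsOperatorRangeInner.apply_apply_left [CompleteSpace E] {T : E →L[𝕜] E}
    {ip : E → E → 𝕜} (hip : IsOperatorRangeInner T ip) (hT : IsSelfAdjoint T) (x y : E) :
    ip (T (T x)) (T y) = ⟪x, T y⟫_𝕜 :=
  (hip _ _ (hT.apply_mem_orthogonal_ker x)).trans (hT.inner_apply_left x y)

section Intertwining

variable [CompleteSpace E] [CompleteSpace F] {S : F →L[𝕜] F} {D : E →L[𝕜] E} {u : E → F}

theorem norm_apply_eq_of_inner_apply_apply_eq (hS : IsSelfAdjoint S) (hD : IsSelfAdjoint D)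
    (hu : ∀ h h', ⟪u h, S (S (u h'))⟫_𝕜 = ⟪h, D (D h')⟫_𝕜) (h : E) : ‖S (u h)‖ = ‖D h‖ := by
  have hsq : ⟪S (u h), S (u h)⟫_𝕜 = ⟪D h, D h⟫_𝕜 := by
    rw [hS.inner_apply_left, hD.inner_apply_left]
    exact hu h h
  rw [norm_eq_sqrt_re_inner (𝕜 := 𝕜), norm_eq_sqrt_re_inner (𝕜 := 𝕜), hsq]

theorem IsOperatorRangeInner.eq_of_inner_apply_apply_eq {ipF : F → F → 𝕜} {ipE : E → E → 𝕜}
    (hipF : IsOperatorRangeInner S ipF) (hipE : IsOperatorRangeInner D ipE)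
    (hS : IsSelfAdjoint S) (hD : IsSelfAdjoint D)
    (hu : ∀ h h', ⟪u h, S (S (u h'))⟫_𝕜 = ⟪h, D (D h')⟫_𝕜) (h h' : E) :
    ipF (S (S (u h))) (S (S (u h'))) = ipE (D (D h)) (D (D h')) := by
  rw [hipF.apply_apply_left hS, hipE.apply_apply_left hD, hu]

theorem IsOperatorRangeInner.exists_eq_of_inner_apply_apply_eq {ipF : F → F → 𝕜}
    {ipE : E → E → 𝕜} (hipF : IsOperatorRangeInner S ipF) (hipE : IsOperatorRangeInner D ipE)
    (hS : IsSelfAdjoint S) (hD : IsSelfAdjoint D)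
    (hu : ∀ h h', ⟪u h, S (S (u h'))⟫_𝕜 = ⟪h, D (D h')⟫_𝕜)
    {p : F} (hp : p ∈ Set.range S) {y : E} (hy : ∀ h, ⟪y, h⟫_𝕜 = ⟪p, u h⟫_𝕜) :
    ∃ x, D x = y ∧ ∀ h, ipF p (S (S (u h))) = ipE (D x) (D (D h)) := by
  obtain ⟨q₀, rfl⟩ := hp
  obtain ⟨q, hq, hSq⟩ := exists_mem_orthogonal_ker_apply_eq S q₀
  have hyq (h : E) : ⟪y, h⟫_𝕜 = ⟪q, S (u h)⟫_𝕜 := by rw [hy, ← hSq, hS.inner_apply_left]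
  obtain ⟨x₀, hx₀⟩ := exists_adjoint_apply_eq_of_norm_inner_le D y ‖q‖ fun h => by
    rw [hyq, ← norm_apply_eq_of_inner_apply_apply_eq hS hD hu]
    exact norm_inner_le_norm _ _
  obtain ⟨x, hx, hDx⟩ := exists_mem_orthogonal_ker_apply_eq D x₀
  rw [hD.adjoint_eq] at hx₀
  refine ⟨x, hDx.trans hx₀, fun h => ?_⟩
  rw [← hSq, hipF _ _ hq, hipE _ _ hx, ← hD.inner_apply_left, hDx, hx₀, hyq]

end Intertwining

theorem inner_pr_neg_apply_of_apply_c2_eq_zero {A B : Type*} [NormedAddCommGroup A]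
    [InnerProductSpace 𝕜 A] [NormedAddCommGroup B] [InnerProductSpace 𝕜 B] [CompleteSpace B]
    {P : B →L[𝕜] B} (hP : IsSelfAdjoint P) {p : WithLp 2 (A × B)} (hp : P (c2 p) = 0)
    (f : A) (g : B) : ⟪p, pr f (-(P g))⟫_𝕜 = ⟪c1 p, f⟫_𝕜 := by
  change ⟪c1 p, f⟫_𝕜 + ⟪c2 p, -(P g)⟫_𝕜 = _
  rw [inner_neg_right, ← hP.inner_apply_left, hp, inner_zero_left, neg_zero, add_zero]

end

theorem stmt_10_general {L2E L2Es H2 : Type*}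
    [NormedAddCommGroup L2E] [InnerProductSpace ℂ L2E] [CompleteSpace L2E]
    [NormedAddCommGroup L2Es] [InnerProductSpace ℂ L2Es] [CompleteSpace L2Es]
    [NormedAddCommGroup H2] [InnerProductSpace ℂ H2] [CompleteSpace H2]
    (MΦ : L2E →L[ℂ] L2Es)
    (S : WithLp 2 (L2Es × L2E) →L[ℂ] WithLp 2 (L2Es × L2E))
    (hS : IsSelfAdjoint S)
    (hS2 : ∀ (f : L2Es) (g : L2E),
      S (S (pr f g)) = pr (f + MΦ g) (ContinuousLinearMap.adjoint MΦ f + g))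
    (PpE : L2E →L[ℂ] L2E) (hPpE : IsSelfAdjoint PpE) (hPpE2 : PpE ∘L PpE = PpE)
    (PpEs : L2Es →L[ℂ] L2Es) (hPpEs2 : PpEs ∘L PpEs = PpEs)
    (hMΦH2 : ∀ h : L2E, PpEs (MΦ (PpE h)) = MΦ (PpE h))
    -- j : H²(E_*) → L²(E_*), isometric with range H²(E_*):
    (j : H2 →L[ℂ] L2Es)
    (hj : ∀ x y : H2, ⟪j x, j y⟫ = ⟪x, y⟫)
    (hjrange : Set.range j = Set.range PpEs)
    -- D = D_{Φ*} = (I − ΦP_{H²(E)}Φ*)^{1/2} on H²(E_*):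
    (D : H2 →L[ℂ] H2) (hD : IsSelfAdjoint D)
    (hDj : ∀ h : H2, j (D (D h)) =
      j h - PpEs (MΦ (PpE (ContinuousLinearMap.adjoint MΦ (j h)))))
    -- P_Φ, the orthogonal projection onto K_Φ:
    (PΦ : WithLp 2 (L2Es × L2E) →L[ℂ] WithLp 2 (L2Es × L2E))
    (hPΦ : ∀ (f : L2Es) (g : L2E),
      PΦ (pr f g) = pr (PpEs f - MΦ (PpE g))
        ((g - PpE g) - ContinuousLinearMap.adjoint MΦ (f - PpEs f)))
    -- the operator-range inner products of ℋ and of H_Φ: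
    (ipW : WithLp 2 (L2Es × L2E) → WithLp 2 (L2Es × L2E) → ℂ)
    (hipW : ∀ x y, x ∈ (LinearMap.ker (S : WithLp 2 (L2Es × L2E) →ₗ[ℂ] WithLp 2 (L2Es × L2E)))ᗮ → ipW (S x) (S y) = ⟪x, y⟫)
    (ipH : H2 → H2 → ℂ)
    (hipH : ∀ x y : H2, x ∈ (LinearMap.ker (D : H2 →ₗ[ℂ] H2))ᗮ → ipH (D x) (D y) = ⟪x, y⟫) :
    -- (1) V(D²h) = P_Φ(h, Φ*h) is isometric from H_Φ to K_Φ: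
    (∀ h h' : H2,
        ipW (PΦ (pr (j h) (ContinuousLinearMap.adjoint MΦ (j h))))
            (PΦ (pr (j h') (ContinuousLinearMap.adjoint MΦ (j h')))) =
          ipH (D (D h)) (D (D h'))) ∧
      -- (2) Vf has the form (f, g) with g ∈ L²⊖H²(E), and Vf ∈ K_Φ ⊆ ℋ:
      (∀ h : H2,
        c1 (PΦ (pr (j h) (ContinuousLinearMap.adjoint MΦ (j h)))) = j (D (D h)) ∧
        PpE (c2 (PΦ (pr (j h) (ContinuousLinearMap.adjoint MΦ (j h))))) = 0 ∧
        PΦ (pr (j h) (ContinuousLinearMap.adjoint MΦ (j h))) ∈ Set.range S) ∧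
      -- (3) V*(f, g) = f for every (f, g) ∈ K_Φ:
      ∀ p ∈ Set.range S, PpEs (c1 p) = c1 p → PpE (c2 p) = 0 →
        ∃ x : H2, j (D x) = c1 p ∧
          ∀ h : H2,
            ipW p (PΦ (pr (j h) (ContinuousLinearMap.adjoint MΦ (j h)))) =
              ipH (D x) (D (D h)) := by
  set A := ContinuousLinearMap.adjoint MΦ
  set u : H2 → WithLp 2 (L2Es × L2E) := fun h => pr (j h) (-PpE (A (j h)))
  have hjP (h : H2) : PpEs (j h) = j h := by
    obtain ⟨z, hz⟩ : j h ∈ Set.range PpEs := hjrange ▸ Set.mem_range_self h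
    rw [← hz, ← ContinuousLinearMap.comp_apply, hPpEs2]
  have hV (h : H2) : PΦ (pr (j h) (A (j h))) = pr (j (D (D h))) (A (j h) - PpE (A (j h))) := by
    rw [hPΦ, hjP, sub_self, map_zero, sub_zero, hDj, hMΦH2]
  have hVu (h : H2) : S (S (u h)) = PΦ (pr (j h) (A (j h))) := by
    rw [hS2, hV, hDj, hMΦH2, map_neg, ← sub_eq_add_neg, ← sub_eq_add_neg]
  have hc2 (h : H2) : PpE (c2 (PΦ (pr (j h) (A (j h))))) = 0 := by
    rw [hV, c2_pr, map_sub, ← ContinuousLinearMap.comp_apply PpE PpE, hPpE2, sub_self]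
  have hu (h h' : H2) : ⟪u h, S (S (u h'))⟫ = ⟪h, D (D h')⟫ := by
    rw [← inner_conj_symm, hVu, inner_pr_neg_apply_of_apply_c2_eq_zero hPpE (hc2 h'), hV, c1_pr,
      hj, inner_conj_symm]
  refine ⟨fun h h' => ?_, fun h => ⟨by rw [hV, c1_pr], hc2 h, _, hVu h⟩, ?_⟩
  · rw [← hVu, ← hVu]
    exact IsOperatorRangeInner.eq_of_inner_apply_apply_eq hipW hipH hS hD hu h h'
  · rintro p hp hp1 hp2
    obtain ⟨y, hy⟩ : c1 p ∈ Set.range j := hjrange ▸ ⟨_, hp1⟩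
    obtain ⟨x, rfl, hx⟩ := IsOperatorRangeInner.exists_eq_of_inner_apply_apply_eq hipW hipH
      hS hD hu hp fun h => by rw [← hj, hy, inner_pr_neg_apply_of_apply_c2_eq_zero hPpE hp2]
    exact ⟨x, hy, fun h => hVu h ▸ hx h⟩

theorem stmt_10 {L2E L2Es H2 : Type*}
    [NormedAddCommGroup L2E] [InnerProductSpace ℂ L2E] [CompleteSpace L2E]
    [NormedAddCommGroup L2Es] [InnerProductSpace ℂ L2Es] [CompleteSpace L2Es]
    [NormedAddCommGroup H2] [InnerProductSpace ℂ H2] [CompleteSpace H2]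
    (MΦ : L2E →L[ℂ] L2Es) (hMΦ : ‖MΦ‖ ≤ 1)
    (S : WithLp 2 (L2Es × L2E) →L[ℂ] WithLp 2 (L2Es × L2E))
    (hS : IsSelfAdjoint S) (hSpos : ∀ x, 0 ≤ (⟪S x, x⟫).re)
    (hS2 : ∀ (f : L2Es) (g : L2E),
      S (S (pr f g)) = pr (f + MΦ g) (ContinuousLinearMap.adjoint MΦ f + g))
    (PpE : L2E →L[ℂ] L2E) (hPpE : IsSelfAdjoint PpE) (hPpE2 : PpE ∘L PpE = PpE)
    (PpEs : L2Es →L[ℂ] L2Es) (hPpEs : IsSelfAdjoint PpEs) (hPpEs2 : PpEs ∘L PpEs = PpEs)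
    (hMΦH2 : ∀ h : L2E, PpEs (MΦ (PpE h)) = MΦ (PpE h))
    -- j : H²(E_*) → L²(E_*), isometric with range H²(E_*):
    (j : H2 →L[ℂ] L2Es)
    (hj : ∀ x y : H2, ⟪j x, j y⟫ = ⟪x, y⟫)
    (hjrange : Set.range j = Set.range PpEs)
    -- D = D_{Φ*} = (I − ΦP_{H²(E)}Φ*)^{1/2} on H²(E_*):
    (D : H2 →L[ℂ] H2) (hD : IsSelfAdjoint D) (hDpos : ∀ x, 0 ≤ (⟪D x, x⟫).re)
    (hDj : ∀ h : H2, j (D (D h)) =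
      j h - PpEs (MΦ (PpE (ContinuousLinearMap.adjoint MΦ (j h)))))
    -- P_Φ, the orthogonal projection onto K_Φ:
    (PΦ : WithLp 2 (L2Es × L2E) →L[ℂ] WithLp 2 (L2Es × L2E))
    (hPΦ : ∀ (f : L2Es) (g : L2E),
      PΦ (pr f g) = pr (PpEs f - MΦ (PpE g))
        ((g - PpE g) - ContinuousLinearMap.adjoint MΦ (f - PpEs f)))
    -- the operator-range inner products of ℋ and of H_Φ:
    (ipW : WithLp 2 (L2Es × L2E) → WithLp 2 (L2Es × L2E) → ℂ)
    (hipW : ∀ x y, x ∈ (LinearMap.ker (S : WithLp 2 (L2Es × L2E) →ₗ[ℂ] WithLp 2 (L2Es × L2E)))ᗮ → ipW (S x) (S y) = ⟪x, y⟫)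
    (ipH : H2 → H2 → ℂ)
    (hipH : ∀ x y : H2, x ∈ (LinearMap.ker (D : H2 →ₗ[ℂ] H2))ᗮ → ipH (D x) (D y) = ⟪x, y⟫) :
    -- (1) V(D²h) = P_Φ(h, Φ*h) is isometric from H_Φ to K_Φ:
    (∀ h h' : H2,
        ipW (PΦ (pr (j h) (ContinuousLinearMap.adjoint MΦ (j h))))
            (PΦ (pr (j h') (ContinuousLinearMap.adjoint MΦ (j h')))) =
          ipH (D (D h)) (D (D h'))) ∧
      -- (2) Vf has the form (f, g) with g ∈ L²⊖H²(E), and Vf ∈ K_Φ ⊆ ℋ: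
      (∀ h : H2,
        c1 (PΦ (pr (j h) (ContinuousLinearMap.adjoint MΦ (j h)))) = j (D (D h)) ∧
        PpE (c2 (PΦ (pr (j h) (ContinuousLinearMap.adjoint MΦ (j h))))) = 0 ∧
        PΦ (pr (j h) (ContinuousLinearMap.adjoint MΦ (j h))) ∈ Set.range S) ∧
      -- (3) V*(f, g) = f for every (f, g) ∈ K_Φ:
      ∀ p ∈ Set.range S, PpEs (c1 p) = c1 p → PpE (c2 p) = 0 →
        ∃ x : H2, j (D x) = c1 p ∧
          ∀ h : H2,
            ipW p (PΦ (pr (j h) (ContinuousLinearMap.adjoint MΦ (j h)))) =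
              ipH (D x) (D (D h)) :=
  stmt_10_general MΦ S hS hS2 PpE hPpE hPpE2 PpEs hPpEs2 hMΦH2 j hj hjrange D hD hDj PΦ hPΦ ipW hipW
    ipH hipH
end
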